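/- arXiv:1903.05162 — 2 statements merged into one kernel-verified Lean document; each statement's English description precedes it below -/
import Mathlib

section
/- Let φ : F → ℝ be locally Lipschitz. Then for every f ∈ F and every g ∈ F, the generalized directional derivative equals the maximum of the pairings over the subdifferential: φ°(f;g) = max { ⟨h,g⟩ : h ∈ ∂φ(f) }, and this maximum is attained. -/
/- Setting: `F` (and `E`) are Fréchet spaces: complete topological vector spaces over ℝ
whose topology is generated by an increasing sequence of seminorms `p 0 ≤ p 1 ≤ ⋯`
(`Monotone p` together with `WithSeminorms p`).  The first seminorm of the family,
written `‖·‖¹` in the paper, is `p 0`.  The dual `F'` with its weak* topology is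
`WeakDual ℝ F`. -/

open Filter Topology

section Defs

variable {E F : Type*}
  [AddCommGroup E] [Module ℝ E] [UniformSpace E] [IsUniformAddGroup E] [ContinuousSMul ℝ E]
  [AddCommGroup F] [Module ℝ F] [UniformSpace F] [IsUniformAddGroup F] [ContinuousSMul ℝ F]

/-- Clarke's generalized directional derivative
`φ°(f;g) = limsup_{h → f, t ↓ 0} (φ(h+tg) − φ(h))/t`. -/
noncomputable def clarkeDeriv (φ : F → ℝ) (f g : F) : ℝ :=
  Filter.limsup (fun q : F × ℝ => (φ (q.1 + q.2 • g) - φ q.1) / q.2)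
    ((𝓝 f) ×ˢ (𝓝[>] (0 : ℝ)))

/-- The Clarke subdifferential `∂φ(f) = {f' ∈ F' : ⟨f',g⟩ ≤ φ°(f;g) ∀ g}`, a subset of
the dual equipped with the weak* topology. -/
def clarkeSubdiff (φ : F → ℝ) (f : F) : Set (WeakDual ℝ F) :=
  {u | ∀ g : F, u g ≤ clarkeDeriv φ f g}

/-- Locally Lipschitz with respect to the first seminorm `p 0` of the defining
increasing family of seminorms (as used throughout the paper). -/
def LocLip (p : ℕ → Seminorm ℝ F) (φ : F → ℝ) : Prop :=
  ∀ x : F, ∃ U ∈ 𝓝 x, ∃ K : ℝ, 0 ≤ K ∧ ∀ a ∈ U, ∀ b ∈ U, |φ a - φ b| ≤ K * (p 0) (a - b)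

/-- The weak* seminorm `ρ_ϕ(y) = sup_{x ∈ ϕ} |y x|` attached to a finite set `ϕ`. -/
noncomputable def dualSeminorm (s : Finset F) (y : WeakDual ℝ F) : ℝ :=
  ⨆ x ∈ s, |y x|

/-- `λ_{φ,ϕ}(f) = min_{y ∈ ∂φ(f)} ρ_ϕ(y)`. -/
noncomputable def lam (φ : F → ℝ) (s : Finset F) (f : F) : ℝ :=
  sInf (dualSeminorm s '' clarkeSubdiff φ f)

/-- The Chang Palais–Smale condition. -/
def ChangPS (φ : F → ℝ) : Prop :=
  ∀ u : ℕ → F, (∃ C : ℝ, ∀ n, |φ (u n)| ≤ C) →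
    (∀ s : Finset F, Tendsto (fun n => lam φ s (u n)) atTop (𝓝 0)) →
    ∃ g : ℕ → ℕ, StrictMono g ∧ ∃ x : F, Tendsto (u ∘ g) atTop (𝓝 x)

/-- The Chang Palais–Smale condition at level `c`. -/
def ChangPSAt (φ : F → ℝ) (c : ℝ) : Prop :=
  ∀ u : ℕ → F, Tendsto (fun n => φ (u n)) atTop (𝓝 c) →
    (∀ s : Finset F, Tendsto (fun n => lam φ s (u n)) atTop (𝓝 0)) →
    ∃ g : ℕ → ℕ, StrictMono g ∧ ∃ x : F, Tendsto (u ∘ g) atTop (𝓝 x)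

/-- Keller `C¹_c` on a set `U`, with derivative family `D`: directional derivatives exist,
each `D x` is continuous linear, and `(x,h) ↦ D x h` is jointly continuous. -/
def C1cOn (τ : E → F) (D : E → (E →L[ℝ] F)) (U : Set E) : Prop :=
  (∀ x ∈ U, ∀ h : E,
      Tendsto (fun t : ℝ => t⁻¹ • (τ (x + t • h) - τ x)) (𝓝[≠] (0 : ℝ)) (𝓝 (D x h))) ∧
  ContinuousOn (fun q : E × E => D q.1 q.2) (U ×ˢ (Set.univ : Set E))

/-- Keller `C¹_c` on a set (derivative existential). -/
def IsC1cOn (τ : E → F) (U : Set E) : Prop :=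
  ∃ D : E → (E →L[ℝ] F), C1cOn τ D U

/-- Local `C¹_c`-diffeomorphism: every point has an open neighbourhood mapped bijectively
onto an open set, `τ` being `C¹_c` there with a `C¹_c` inverse. -/
def IsLocalC1cDiffeo (τ : E → F) : Prop :=
  ∀ x : E, ∃ U : Set E, IsOpen U ∧ x ∈ U ∧ ∃ V : Set F, IsOpen V ∧ Set.BijOn τ U V ∧
    IsC1cOn τ U ∧ ∃ σ : F → E, (∀ y ∈ V, τ (σ y) = y) ∧ (∀ x' ∈ U, σ (τ x') = x') ∧
      IsC1cOn σ V

end Defs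

/-! The Clarke derivative `φ°(f; ·)` is sublinear and, `φ` being locally Lipschitz for `p 0`,
dominated by `K * p 0`. Hahn–Banach extends `t • g ↦ t * φ°(f; g)` from the line `ℝ g` to a
linear form below `φ°(f; ·)`; the domination makes it continuous, so it lies in `∂φ(f)` and
attains the value `φ°(f; g)` at `g`. -/

section LimsupBounded

variable {α : Type*} {l : Filter α} {u : α → ℝ} {C : ℝ}

lemma Filter.isBoundedUnder_of_eventually_abs_le (hu : ∀ᶠ x in l, |u x| ≤ C) :
    IsBoundedUnder (· ≤ ·) l u ∧ IsBoundedUnder (· ≥ ·) l u :=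
  isBoundedUnder_le_abs.1 (isBoundedUnder_of_eventually_le hu)

lemma Filter.limsup_comp_le_of_tendsto [l.NeBot] {m : α → α} (hm : Tendsto m l l)
    (hu : ∀ᶠ x in l, |u x| ≤ C) : limsup (u ∘ m) l ≤ limsup u l := by
  rw [limsup_comp]
  exact limsup_le_limsup_of_le hm
    (isBoundedUnder_of_eventually_abs_le (hm.eventually hu)).2.isCoboundedUnder_le
    (isBoundedUnder_of_eventually_abs_le hu).1

lemma Filter.limsup_const_mul_of_pos [l.NeBot] (hu : ∀ᶠ x in l, |u x| ≤ C) {c : ℝ}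
    (hc : 0 < c) : limsup (fun x => c * u x) l = c * limsup u l := by
  have hcu : ∀ᶠ x in l, |c * u x| ≤ c * C :=
    hu.mono fun x hx => by rw [abs_mul, abs_of_pos hc]; gcongr
  obtain ⟨hu_le, hu_ge⟩ := isBoundedUnder_of_eventually_abs_le hu
  obtain ⟨hcu_le, hcu_ge⟩ := isBoundedUnder_of_eventually_abs_le hcu
  exact ((OrderIso.mulLeft₀ c hc).limsup_apply hu_le hu_ge.isCoboundedUnder_le hcu_le
    hcu_ge.isCoboundedUnder_le).symm

end LimsupBounded

lemma exists_linearMap_le_sublinear_eq {E : Type*} [AddCommGroup E] [Module ℝ E] (N : E → ℝ)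
    (N_hom : ∀ c : ℝ, 0 < c → ∀ x, N (c • x) = c * N x) (N_add : ∀ x y, N (x + y) ≤ N x + N y)
    (x : E) : ∃ ℓ : E →ₗ[ℝ] ℝ, (∀ y, ℓ y ≤ N y) ∧ ℓ x = N x := by
  have N_zero : N 0 = 0 := by
    have := N_hom 2 two_pos 0
    rw [smul_zero] at this
    linarith
  have hx : ∀ c : ℝ, c • x = 0 → c • N x = 0 := by
    intro c hc
    rcases smul_eq_zero.1 hc with rfl | rfl
    · exact zero_smul ℝ _
    · rw [N_zero, smul_zero]
  set ℓ₀ := LinearPMap.mkSpanSingleton' (σ := RingHom.id ℝ) x (N x) hx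
  have hℓ₀ : ∀ y : ℓ₀.domain, ℓ₀ y ≤ N y := by
    rintro ⟨y, hy⟩
    obtain ⟨c, rfl⟩ := Submodule.mem_span_singleton.1 hy
    rw [LinearPMap.mkSpanSingleton'_apply x (N x) hx c hy, smul_eq_mul]
    change c * N x ≤ N (c • x)
    rcases lt_trichotomy c 0 with hc | rfl | hc
    · have := N_add (c • x) ((-c) • x)
      rw [← add_smul, add_neg_cancel, zero_smul, N_zero, N_hom _ (neg_pos.2 hc)] at this
      linarith
    · simp [N_zero]
    · exact (N_hom c hc x).ge
  obtain ⟨ℓ, hℓ_ext, hℓ_le⟩ := exists_extension_of_le_sublinear ℓ₀ N N_hom N_add hℓ₀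
  refine ⟨ℓ, hℓ_le, ?_⟩
  have hx_mem : x ∈ ℓ₀.domain := Submodule.mem_span_singleton_self x
  rw [hℓ_ext ⟨x, hx_mem⟩, LinearPMap.mkSpanSingleton'_apply_self]

section NhdsProdNhdsGT

variable {X : Type*} [AddCommGroup X] [Module ℝ X] [TopologicalSpace X] [ContinuousAdd X]
  [ContinuousSMul ℝ X]

lemma tendsto_add_smul_nhds_prod_nhdsGT (x v : X) :
    Tendsto (fun q : X × ℝ => q.1 + q.2 • v) (𝓝 x ×ˢ 𝓝[>] (0 : ℝ)) (𝓝 x) := by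
  simpa using (tendsto_fst (f := 𝓝 x) (g := 𝓝[>] (0 : ℝ))).add
    ((tendsto_snd.mono_right nhdsWithin_le_nhds).smul_const v)

lemma tendsto_translate_nhds_prod_nhdsGT (x v : X) :
    Tendsto (fun q : X × ℝ => (q.1 + q.2 • v, q.2)) (𝓝 x ×ˢ 𝓝[>] (0 : ℝ))
      (𝓝 x ×ˢ 𝓝[>] (0 : ℝ)) :=
  (tendsto_add_smul_nhds_prod_nhdsGT x v).prodMk tendsto_snd

end NhdsProdNhdsGT

lemma tendsto_rescale_nhds_prod_nhdsGT {X : Type*} [TopologicalSpace X] (x : X) {c : ℝ}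
    (hc : 0 < c) :
    Tendsto (fun q : X × ℝ => (q.1, c * q.2)) (𝓝 x ×ˢ 𝓝[>] (0 : ℝ)) (𝓝 x ×ˢ 𝓝[>] (0 : ℝ)) := by
  have hmul : Tendsto (c * ·) (𝓝[>] (0 : ℝ)) (𝓝[>] 0) :=
    tendsto_nhdsWithin_of_tendsto_nhds_of_eventually_within _
      (by simpa using ((continuous_const_mul c).tendsto 0).mono_left nhdsWithin_le_nhds)
      (eventually_mem_nhdsWithin.mono fun t ht => mul_pos hc ht)
  exact tendsto_fst.prodMk (hmul.comp tendsto_snd)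

section ClarkeQuotient

variable {F : Type*} [AddCommGroup F] [Module ℝ F]

noncomputable def clarkeQuotient (φ : F → ℝ) (g : F) (q : F × ℝ) : ℝ :=
  (φ (q.1 + q.2 • g) - φ q.1) / q.2

lemma clarkeQuotient_add (φ : F → ℝ) (g₁ g₂ : F) (q : F × ℝ) :
    clarkeQuotient φ (g₁ + g₂) q =
      clarkeQuotient φ g₁ (q.1 + q.2 • g₂, q.2) + clarkeQuotient φ g₂ q := by
  simp only [clarkeQuotient, smul_add, ← add_assoc, add_right_comm _ (q.2 • g₁), ← add_div,
    sub_add_sub_cancel]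

lemma clarkeQuotient_smul (φ : F → ℝ) {c : ℝ} (hc : c ≠ 0) (g : F) (q : F × ℝ) :
    clarkeQuotient φ (c • g) q = c * clarkeQuotient φ g (q.1, c * q.2) := by
  simp only [clarkeQuotient, smul_smul, mul_comm q.2 c]
  rw [mul_div_assoc', mul_div_mul_left _ _ hc]

end ClarkeQuotient

section ClarkeDeriv

variable {F : Type*}
  [AddCommGroup F] [Module ℝ F] [UniformSpace F] [IsUniformAddGroup F] [ContinuousSMul ℝ F]

omit [IsUniformAddGroup F] [ContinuousSMul ℝ F] in
lemma clarkeDeriv_eq_limsup (φ : F → ℝ) (f g : F) :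
    clarkeDeriv φ f g = limsup (clarkeQuotient φ g) (𝓝 f ×ˢ 𝓝[>] 0) :=
  rfl

namespace LocLip

variable {p : ℕ → Seminorm ℝ F} {φ : F → ℝ}

lemma exists_abs_clarkeQuotient_le (hφ : LocLip p φ) (f : F) :
    ∃ K : NNReal, ∀ g, ∀ᶠ q in 𝓝 f ×ˢ 𝓝[>] 0, |clarkeQuotient φ g q| ≤ K * p 0 g := by
  obtain ⟨U, hU, K, hK, hLip⟩ := hφ f
  refine ⟨K.toNNReal, fun g => ?_⟩
  filter_upwards [tendsto_fst.eventually hU,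
    (tendsto_add_smul_nhds_prod_nhdsGT f g).eventually hU,
    tendsto_snd.eventually (self_mem_nhdsWithin (a := (0 : ℝ)) (s := Set.Ioi 0))]
    with q hq hqg (ht : 0 < q.2)
  have := hLip _ hqg _ hq
  rw [add_sub_cancel_left, map_smul_eq_mul, Real.norm_eq_abs, abs_of_pos ht] at this
  rw [clarkeQuotient, abs_div, abs_of_pos ht, div_le_iff₀ ht, Real.coe_toNNReal _ hK]
  linarith

lemma exists_clarkeDeriv_le (hφ : LocLip p φ) (f : F) :
    ∃ K : NNReal, ∀ g, clarkeDeriv φ f g ≤ K * p 0 g := by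
  obtain ⟨K, hK⟩ := hφ.exists_abs_clarkeQuotient_le f
  exact ⟨K, fun g => limsup_le_of_le
    (isBoundedUnder_of_eventually_abs_le (hK g)).2.isCoboundedUnder_le
    ((hK g).mono fun _ hq => (abs_le.1 hq).2)⟩

lemma clarkeDeriv_add_le (hφ : LocLip p φ) (f g₁ g₂ : F) :
    clarkeDeriv φ f (g₁ + g₂) ≤ clarkeDeriv φ f g₁ + clarkeDeriv φ f g₂ := by
  obtain ⟨K, hK⟩ := hφ.exists_abs_clarkeQuotient_le f
  have hm := tendsto_translate_nhds_prod_nhdsGT f g₂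
  obtain ⟨h₁_le, h₁_ge⟩ := isBoundedUnder_of_eventually_abs_le (hm.eventually (hK g₁))
  obtain ⟨h₂_le, h₂_ge⟩ := isBoundedUnder_of_eventually_abs_le (hK g₂)
  calc clarkeDeriv φ f (g₁ + g₂)
      = limsup ((clarkeQuotient φ g₁ ∘ fun q : F × ℝ => (q.1 + q.2 • g₂, q.2))
          + clarkeQuotient φ g₂) (𝓝 f ×ˢ 𝓝[>] 0) :=
        congrArg (limsup · _) (funext (clarkeQuotient_add φ g₁ g₂))
    _ ≤ limsup (clarkeQuotient φ g₁ ∘ fun q : F × ℝ => (q.1 + q.2 • g₂, q.2))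
          (𝓝 f ×ˢ 𝓝[>] 0) + clarkeDeriv φ f g₂ :=
        limsup_add_le h₁_ge h₁_le h₂_ge.isCoboundedUnder_le h₂_le
    _ ≤ clarkeDeriv φ f g₁ + clarkeDeriv φ f g₂ :=
        add_le_add_left (limsup_comp_le_of_tendsto hm (hK g₁)) _

lemma clarkeDeriv_smul_le (hφ : LocLip p φ) (f : F) {c : ℝ} (hc : 0 < c) (g : F) :
    clarkeDeriv φ f (c • g) ≤ c * clarkeDeriv φ f g := by
  obtain ⟨K, hK⟩ := hφ.exists_abs_clarkeQuotient_le f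
  have hm := tendsto_rescale_nhds_prod_nhdsGT f hc
  calc clarkeDeriv φ f (c • g)
      = limsup (fun q => c * (clarkeQuotient φ g ∘ fun q : F × ℝ => (q.1, c * q.2)) q)
          (𝓝 f ×ˢ 𝓝[>] 0) :=
        congrArg (limsup · _) (funext (clarkeQuotient_smul φ hc.ne' g))
    _ = c * limsup (clarkeQuotient φ g ∘ fun q : F × ℝ => (q.1, c * q.2)) (𝓝 f ×ˢ 𝓝[>] 0) :=
        limsup_const_mul_of_pos (hm.eventually (hK g)) hc
    _ ≤ c * clarkeDeriv φ f g :=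
        mul_le_mul_of_nonneg_left (limsup_comp_le_of_tendsto hm (hK g)) hc.le

lemma clarkeDeriv_smul (hφ : LocLip p φ) (f : F) {c : ℝ} (hc : 0 < c) (g : F) :
    clarkeDeriv φ f (c • g) = c * clarkeDeriv φ f g := by
  refine (hφ.clarkeDeriv_smul_le f hc g).antisymm ?_
  have := hφ.clarkeDeriv_smul_le f (inv_pos.2 hc) (c • g)
  rw [inv_smul_smul₀ hc.ne'] at this
  rwa [← le_inv_mul_iff₀ hc]

end LocLip

end ClarkeDeriv

theorem clarkeDeriv_eq_max_subdiff_general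
    {F : Type*} [AddCommGroup F] [Module ℝ F] [UniformSpace F] [IsUniformAddGroup F]
    [ContinuousSMul ℝ F]
    (p : ℕ → Seminorm ℝ F) (hsp : WithSeminorms p)
    (φ : F → ℝ) (hφ : LocLip p φ) (f g : F) :
    IsGreatest ((fun u : WeakDual ℝ F => u g) '' clarkeSubdiff φ f) (clarkeDeriv φ f g) := by
  obtain ⟨K, hK⟩ := hφ.exists_clarkeDeriv_le f
  obtain ⟨ℓ, hℓ_le, hℓ_g⟩ := exists_linearMap_le_sublinear_eq (clarkeDeriv φ f)
    (fun _ hc => hφ.clarkeDeriv_smul f hc) (hφ.clarkeDeriv_add_le f) g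
  have hℓ_cont : Continuous ℓ :=
    hsp.continuous_real_rng ℓ
      ⟨{0}, K, fun y => by simpa [NNReal.smul_def] using (hℓ_le y).trans (hK y)⟩
  refine ⟨⟨{ toLinearMap := ℓ, cont := hℓ_cont }, hℓ_le, hℓ_g⟩, ?_⟩
  rintro _ ⟨u, hu, rfl⟩
  exact hu g

/-- `φ°(f;g) = max {⟨h,g⟩ : h ∈ ∂φ(f)}`, the maximum being attained. -/
theorem clarkeDeriv_eq_max_subdiff
    {F : Type*} [AddCommGroup F] [Module ℝ F] [UniformSpace F] [IsUniformAddGroup F]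
    [ContinuousSMul ℝ F] [CompleteSpace F]
    (p : ℕ → Seminorm ℝ F) (hmono : Monotone p) (hsp : WithSeminorms p)
    (φ : F → ℝ) (hφ : LocLip p φ) (f g : F) :
    IsGreatest ((fun u : WeakDual ℝ F => u g) '' clarkeSubdiff φ f) (clarkeDeriv φ f g) :=
  clarkeDeriv_eq_max_subdiff_general p hsp φ hφ f g
end

section
/- Let φ : F → ℝ be locally Lipschitz and let C([0,1];F) be the Fréchet space of continuous paths with seminorms ‖γ‖ⁱ' = sup_{t∈[0,1]} ‖γ(t)‖ⁱ. Then the function Ψ : C([0,1];F) → ℝ defined by Ψ(γ) = max_{t∈[0,1]} φ(γ(t)) is locally Lipschitz. -/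
/- Setting: `F` (and `E`) are Fréchet spaces: complete topological vector spaces over ℝ
whose topology is generated by an increasing sequence of seminorms `p 0 ≤ p 1 ≤ ⋯`
(`Monotone p` together with `WithSeminorms p`).  The first seminorm of the family,
written `‖·‖¹` in the paper, is `p 0`.  The dual `F'` with its weak* topology is
`WeakDual ℝ F`. -/

open Filter Topology

/-! A locally Lipschitz `φ` is uniformly locally Lipschitz along the compact image of a path `γ₀`:
finitely many Lipschitz neighbourhoods cover it, and a Lebesgue entourage `V` of this cover gives
one constant `L` valid on every `V`-ball centred on the image. Paths uniformly `V`-close to `γ₀`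
form a neighbourhood of `γ₀`, and for two such paths `γ₁, γ₂` the bound
`|φ (γ₁ t) - φ (γ₂ t)| ≤ L ‖γ₁ t - γ₂ t‖¹` passes to the maxima over `t`. -/

open Filter Topology Set Uniformity UniformSpace

theorem abs_ciSup_sub_ciSup_le {ι : Sort*} [Nonempty ι] {f g : ι → ℝ} {c : ℝ}
    (hf : BddAbove (range f)) (hg : BddAbove (range g)) (h : ∀ i, |f i - g i| ≤ c) :
    |(⨆ i, f i) - ⨆ i, g i| ≤ c := by
  have key : ∀ u v : ι → ℝ, BddAbove (range v) → (∀ i, u i - v i ≤ c) →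
      (⨆ i, u i) - ⨆ i, v i ≤ c := fun u v hv huv => by
    rw [sub_le_iff_le_add]
    exact ciSup_le fun i => by linarith [huv i, le_ciSup hv i]
  rw [abs_sub_le_iff]
  exact ⟨key f g hg fun i => (abs_sub_le_iff.1 (h i)).1,
    key g f hf fun i => (abs_sub_le_iff.1 (h i)).2⟩

section LocLip

variable {F : Type*} [AddCommGroup F] [Module ℝ F] [UniformSpace F] {p : ℕ → Seminorm ℝ F}
  {φ : F → ℝ}

theorem LocLip.continuous (hφ : LocLip p φ) (hp : WithSeminorms p) : Continuous φ := by
  refine continuous_iff_continuousAt.2 fun x => ?_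
  obtain ⟨U, hU, K, -, hK⟩ := hφ x
  have hsmall : Tendsto (fun a => p 0 (a - x)) (𝓝 x) (𝓝 0) :=
    Metric.tendsto_nhds.2 fun ε hε => ((hp.tendsto_nhds id x).1 tendsto_id 0 ε hε).mono
      fun a ha => by rwa [Real.dist_0_eq_abs, abs_of_nonneg (apply_nonneg _ _)]
  have hbound : Tendsto (fun a => K * p 0 (a - x)) (𝓝 x) (𝓝 0) := by
    simpa only [mul_zero] using hsmall.const_mul K
  refine tendsto_iff_dist_tendsto_zero.2 <|
    squeeze_zero' (Eventually.of_forall fun _ => dist_nonneg) ?_ hbound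
  filter_upwards [hU] with a ha
  exact (Real.dist_eq _ _).trans_le (hK a ha x (mem_of_mem_nhds hU))

theorem LocLip.exists_entourage_of_isCompact (hφ : LocLip p φ) {S : Set F} (hS : IsCompact S) :
    ∃ V ∈ 𝓤 F, ∃ L, 0 ≤ L ∧
      ∀ x ∈ S, ∀ a ∈ ball x V, ∀ b ∈ ball x V, |φ a - φ b| ≤ L * p 0 (a - b) := by
  choose U hU K hK0 hK using hφ
  obtain ⟨t, -, hcover⟩ := hS.elim_nhds_subcover (fun x => interior (U x))
    fun x _ => interior_mem_nhds.2 (hU x)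
  obtain ⟨V, hV, hball⟩ := lebesgue_number_lemma (U := fun x : t => interior (U x)) hS
    (fun _ => isOpen_interior)
    (hcover.trans_eq (biUnion_eq_iUnion (t : Set F) fun x _ => interior (U x)))
  refine ⟨V, hV, ∑ y ∈ t, K y, Finset.sum_nonneg fun y _ => hK0 y, fun x hx a ha b hb => ?_⟩
  obtain ⟨⟨y, hy⟩, hxy⟩ := hball x hx
  calc |φ a - φ b| ≤ K y * p 0 (a - b) :=
        hK y a (interior_subset (hxy ha)) b (interior_subset (hxy hb))
    _ ≤ (∑ y ∈ t, K y) * p 0 (a - b) :=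
        mul_le_mul_of_nonneg_right (Finset.single_le_sum (fun y _ => hK0 y) hy) (apply_nonneg _ _)

end LocLip

open Pointwise Uniformity in
theorem maxOnPath_locallyLipschitz_general
    {F : Type*} [AddCommGroup F] [Module ℝ F] [UniformSpace F]
    (p : ℕ → Seminorm ℝ F) (hsp : WithSeminorms p)
    (φ : F → ℝ) (hφ : LocLip p φ) :
    ∀ γ₀ : C(unitInterval, F), ∃ U ∈ 𝓝 γ₀, ∃ K : ℝ, 0 ≤ K ∧
      ∀ γ₁ ∈ U, ∀ γ₂ ∈ U,
        |(⨆ t : unitInterval, φ (γ₁ t)) - ⨆ t : unitInterval, φ (γ₂ t)| ≤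
          K * ⨆ t : unitInterval, (p 0) (γ₁ t - γ₂ t) := by
  intro γ₀
  have := hsp.topologicalAddGroup
  have hp : Continuous (p 0) := hsp.continuous_seminorm 0
  obtain ⟨V, hV, L, hL, hLip⟩ :=
    hφ.exists_entourage_of_isCompact (isCompact_range γ₀.continuous)
  have hnhds : {γ : C(unitInterval, F) | ∀ t, (γ₀ t, γ t) ∈ V} ∈ 𝓝 γ₀ :=
    ball_mem_nhds γ₀ (ContinuousMap.hasBasis_compactConvergenceUniformity_of_compact.mem_of_mem hV)
  refine ⟨_, hnhds, L, hL, fun γ₁ h₁ γ₂ h₂ => ?_⟩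
  have hbdd : ∀ f : C(unitInterval, ℝ), BddAbove (range f) :=
    fun f => (isCompact_range f.continuous).bddAbove
  have hφc := hφ.continuous hsp
  exact abs_ciSup_sub_ciSup_le (hbdd ⟨_, hφc.comp γ₁.continuous⟩)
    (hbdd ⟨_, hφc.comp γ₂.continuous⟩) fun t =>
      (hLip _ ⟨t, rfl⟩ _ (h₁ t) _ (h₂ t)).trans <| mul_le_mul_of_nonneg_left
        (le_ciSup (hbdd ⟨_, hp.comp (γ₁.continuous.sub γ₂.continuous)⟩) t) hL

/-- `Ψ(γ) = max_{t∈[0,1]} φ(γ(t))` is locally Lipschitz on `C([0,1];F)`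
(with respect to the sup-seminorm `‖γ‖¹' = sup_t ‖γ t‖¹`). -/
theorem maxOnPath_locallyLipschitz
    {F : Type*} [AddCommGroup F] [Module ℝ F] [UniformSpace F] [IsUniformAddGroup F]
    [ContinuousSMul ℝ F] [CompleteSpace F]
    (p : ℕ → Seminorm ℝ F) (hmono : Monotone p) (hsp : WithSeminorms p)
    (φ : F → ℝ) (hφ : LocLip p φ) :
    ∀ γ₀ : C(unitInterval, F), ∃ U ∈ 𝓝 γ₀, ∃ K : ℝ, 0 ≤ K ∧
      ∀ γ₁ ∈ U, ∀ γ₂ ∈ U,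
        |(⨆ t : unitInterval, φ (γ₁ t)) - ⨆ t : unitInterval, φ (γ₂ t)| ≤
          K * ⨆ t : unitInterval, (p 0) (γ₁ t - γ₂ t) :=
  maxOnPath_locallyLipschitz_general p hsp φ hφ
end
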